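/- Let W be a finite Coxeter group. Then every modular reflection subgroup of W is a parabolic reflection subgroup of W. -/

import Mathlib

open Module

section Setup

variable {V : Type*} [NormedAddCommGroup V] [InnerProductSpace ℝ V] [FiniteDimensional ℝ V]

/-- The orthogonal reflection `t_α` in the hyperplane orthogonal to `α`. -/
noncomputable def rootReflection (α : V) : V ≃ₗᵢ[ℝ] V := Submodule.reflection (ℝ ∙ α)ᗮ

/-- The absolute length of `w` with respect to a set `T`: the minimum length of a word
for `w` in the alphabet `T`. -/
noncomputable def absLength {G : Type*} [Group G] (T : Set G) (w : G) : ℕ :=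
  sInf {n | ∃ l : List G, (∀ t ∈ l, t ∈ T) ∧ l.prod = w ∧ l.length = n}

/-- The absolute order: `u ≤_T v` iff `ℓ_T(u) + ℓ_T(v u⁻¹) = ℓ_T(v)`. -/
def absLe {G : Type*} [Group G] (T : Set G) (u v : G) : Prop :=
  absLength T u + absLength T (v * u⁻¹) = absLength T v

/-- The fixed space `Fix(w)`. -/
noncomputable def fixSpace (w : V ≃ₗᵢ[ℝ] V) : Submodule ℝ V :=
  LinearMap.ker ((w.toLinearEquiv : V →ₗ[ℝ] V) - LinearMap.id)

/-- The moved space `Mov(w)`, the orthogonal complement of `Fix(w)`. -/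
noncomputable def movSpace (w : V ≃ₗᵢ[ℝ] V) : Submodule ℝ V := (fixSpace w)ᗮ

/-- `V_H`: the span of the roots `α ∈ Φ` with `t_α ∈ H`. -/
noncomputable def rootSpan (Φ : Set V) (H : Subgroup (V ≃ₗᵢ[ℝ] V)) : Submodule ℝ V :=
  Submodule.span ℝ {α | α ∈ Φ ∧ rootReflection α ∈ H}

/-- The geometric lattice `L_W` of subspaces of `V` spanned by subsets of `Φ`. -/
def latticeLW (Φ : Set V) : Set (Submodule ℝ V) :=
  {U | ∃ s ⊆ Φ, U = Submodule.span ℝ s}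

/-- The greatest lower bound of two elements of `L_W` in the lattice `L_W`. -/
noncomputable def latMeet (Φ : Set V) (Y Z : Submodule ℝ V) : Submodule ℝ V :=
  Submodule.span ℝ (Φ ∩ ↑Y ∩ ↑Z)

/-- `Z` is a modular element of the geometric lattice `L_W` (whose rank function is the
dimension, whose meet is `latMeet` and whose join is the join of subspaces). -/
def IsModularFlat (Φ : Set V) (Z : Submodule ℝ V) : Prop :=
  Z ∈ latticeLW Φ ∧ ∀ Y ∈ latticeLW Φ,
    finrank ℝ Y + finrank ℝ Z = finrank ℝ (latMeet Φ Y Z) + finrank ℝ ↥(Y ⊔ Z)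

/-- `H` is a reflection subgroup: a subgroup generated by reflections. -/
def IsReflSubgroup (Φ : Set V) (H : Subgroup (V ≃ₗᵢ[ℝ] V)) : Prop :=
  ∃ R ⊆ rootReflection '' Φ, H = Subgroup.closure R

/-- `H` is parabolic: `t_α ∈ H` for every root `α ∈ Φ ∩ V_H`. -/
def IsParabolicSubgroup (Φ : Set V) (H : Subgroup (V ≃ₗᵢ[ℝ] V)) : Prop :=
  ∀ α ∈ Φ, α ∈ rootSpan Φ H → rootReflection α ∈ H

/-- `H` is a modular subgroup of `K`: every left coset of `H` in `K` has a minimum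
element in the absolute order. -/
def IsModularSubgroupIn {G : Type*} [Group G] (T : Set G) (H K : Subgroup G) : Prop :=
  ∀ k ∈ K, ∃ m : G, k⁻¹ * m ∈ H ∧ ∀ u : G, k⁻¹ * u ∈ H → absLe T m u

/-- The hypotheses that `Φ` is the root system of a finite Coxeter group `W`, realized
via its standard geometric representation:  `Φ` is a finite set of nonzero vectors,
invariant under `W = ⟨t_α : α ∈ Φ⟩`, `W` is finite, and every reflection of `W` (element
whose fixed space is a hyperplane) is of the form `t_α` for some `α ∈ Φ`. -/
structure IsRootSystemOf (Φ : Set V) (W : Subgroup (V ≃ₗᵢ[ℝ] V)) : Prop where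
  closure_eq : W = Subgroup.closure (rootReflection '' Φ)
  finite_roots : Φ.Finite
  ne_zero : ∀ α ∈ Φ, α ≠ 0
  finite_group : Finite W
  invariant : ∀ g ∈ W, ∀ α ∈ Φ, g α ∈ Φ
  refl_mem : ∀ g ∈ W, finrank ℝ (fixSpace g) = finrank ℝ V - 1 → g ∈ rootReflection '' Φ

end Setup

/-!
On the reflection group `W`, the absolute length is the dimension of the moved space:
multiplying by a reflection changes `dim Mov` by at most one, and conversely (Carter) every
`w ≠ 1` moves some root `α`, after which `t_α w` has a smaller moved space. That root exists
because the stabilizer in `W` of a vector orthogonal to no root is trivial, which is proved with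
a simple system and the deletion argument.

Take `h ∈ H` whose moved space has maximal dimension; then `Mov(h)` contains every root of `H`,
hence `V_H`. If `α ∈ Φ ∩ V_H` but `t_α ∉ H`, modularity forces `t_α` to be the minimum of the
coset `t_α H`, so `ℓ(t_α h) = 1 + ℓ(t_α h t_α) = 1 + dim Mov(h)`, whereas `α ∈ Mov(h)` gives
`ℓ(t_α h) = dim Mov(t_α h) < dim Mov(h)`.
-/

open RealInnerProductSpace

section Reflections

variable {V : Type*} [NormedAddCommGroup V] [InnerProductSpace ℝ V]

lemma rootReflection_apply (α v : V) :
    rootReflection α v = v - (2 * (⟪α, v⟫ / ‖α‖ ^ 2)) • α := by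
  rw [rootReflection, Submodule.reflection_orthogonal_apply,
    Submodule.reflection_singleton_apply]
  simp only [RCLike.ofReal_real_eq_id, id_eq]
  module

lemma rootReflection_apply_self (α : V) : rootReflection α α = -α :=
  Submodule.reflection_orthogonalComplement_singleton_eq_neg α

lemma rootReflection_apply_eq_self_iff {α v : V} :
    rootReflection α v = v ↔ ⟪α, v⟫ = 0 := by
  rw [rootReflection, Submodule.reflection_eq_self_iff,
    Submodule.mem_orthogonal_singleton_iff_inner_right]

lemma rootReflection_apply_sub_mem_span (α v : V) : rootReflection α v - v ∈ ℝ ∙ α := by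
  rw [rootReflection_apply, sub_sub_cancel_left, ← neg_smul]
  exact Submodule.smul_mem _ _ (Submodule.mem_span_singleton_self α)

lemma rootReflection_inv (α : V) : (rootReflection α)⁻¹ = rootReflection α :=
  Submodule.reflection_inv

lemma rootReflection_rootReflection (α v : V) : rootReflection α (rootReflection α v) = v :=
  Submodule.reflection_reflection _ v

lemma rootReflection_mul_self (α : V) : rootReflection α * rootReflection α = 1 :=
  Submodule.reflection_mul_reflection _

lemma rootReflection_smul (α : V) {c : ℝ} (hc : c ≠ 0) :
    rootReflection (c • α) = rootReflection α := by
  simp only [rootReflection, Submodule.span_singleton_smul_eq (IsUnit.mk0 c hc)]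

lemma rootReflection_neg (α : V) : rootReflection (-α) = rootReflection α := by
  rw [← neg_one_smul ℝ α, rootReflection_smul α (by norm_num)]

lemma rootReflection_apply_sub {u v : V} (h : ‖u‖ = ‖v‖) : rootReflection (u - v) u = v :=
  Submodule.reflection_sub h

lemma rootReflection_map (g : V ≃ₗᵢ[ℝ] V) (α : V) :
    rootReflection (g α) = g * rootReflection α * g⁻¹ := by
  ext v
  have hv : v = g (g⁻¹ v) := (g.apply_symm_apply v).symm
  simp only [LinearIsometryEquiv.coe_mul, Function.comp_apply, rootReflection_apply, map_sub,
    map_smul, LinearIsometryEquiv.norm_map]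
  conv_lhs => rw [hv, LinearIsometryEquiv.inner_map_map]

lemma inner_rootReflection_lt {x δ β : V} (hδx : 0 < ⟪x, δ⟫) (hδβ : 0 < ⟪δ, β⟫) :
    ⟪x, rootReflection δ β⟫ < ⟪x, β⟫ := by
  have hδ : δ ≠ 0 := by rintro rfl; simp at hδx
  have : 0 < 2 * (⟪δ, β⟫ / ‖δ‖ ^ 2) * ⟪x, δ⟫ := by
    have := norm_pos_iff.mpr hδ
    positivity
  rw [rootReflection_apply, inner_sub_right, real_inner_smul_right]
  linarith

lemma mem_fixSpace {w : V ≃ₗᵢ[ℝ] V} {v : V} : v ∈ fixSpace w ↔ w v = v := by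
  rw [fixSpace, LinearMap.mem_ker, LinearMap.sub_apply, LinearMap.id_apply, sub_eq_zero]
  rfl

end Reflections

section AbsoluteLength

variable {G : Type*} [Group G] {T : Set G}

lemma absLength_list_prod_le {l : List G} (hl : ∀ t ∈ l, t ∈ T) :
    absLength T l.prod ≤ l.length :=
  Nat.sInf_le ⟨l, hl, rfl, rfl⟩

lemma exists_list_length_eq_absLength {w : G}
    (hw : ∃ l : List G, (∀ t ∈ l, t ∈ T) ∧ l.prod = w) :
    ∃ l : List G, (∀ t ∈ l, t ∈ T) ∧ l.prod = w ∧ l.length = absLength T w := by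
  obtain ⟨l, hl, hlw⟩ := hw
  exact Nat.sInf_mem (s := {n | ∃ l : List G, (∀ t ∈ l, t ∈ T) ∧ l.prod = w ∧ l.length = n})
    ⟨l.length, l, hl, hlw, rfl⟩

lemma le_length_of_subadditive (f : G → ℕ) (h1 : f 1 = 0) (hmul : ∀ a b, f (a * b) ≤ f a + f b)
    (hT : ∀ t ∈ T, f t ≤ 1) {l : List G} (hl : ∀ t ∈ l, t ∈ T) : f l.prod ≤ l.length := by
  induction l with
  | nil => simp [h1]
  | cons t l ih =>
    have := hmul t l.prod
    have := hT t (hl t List.mem_cons_self)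
    have := ih fun s hs => hl s (List.mem_cons_of_mem t hs)
    rw [List.prod_cons, List.length_cons]
    omega

/-- If `t ∉ H` has absolute length one, the minimum of the coset `tH` can only be `t` itself. -/
lemma IsModularSubgroupIn.absLength_mul_eq {H K : Subgroup G} (hmod : IsModularSubgroupIn T H K)
    (hHK : H ≤ K) (hK : ∀ g ∈ K, absLength T g = 0 → g = 1) {t : G} (htK : t ∈ K)
    (ht : absLength T t = 1) (htH : t ∉ H) {h : G} (hh : h ∈ H) :
    absLength T (t * h) = absLength T (t * h * t⁻¹) + 1 := by
  obtain ⟨m, hmH, hmin⟩ := hmod t htK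
  have hmK : m ∈ K := by simpa using K.mul_mem htK (hHK hmH)
  have hmt : m = t := by
    have hle := hmin t (by simp)
    rw [absLe, ht] at hle
    obtain h0 | h0 : absLength T m = 0 ∨ absLength T (t * m⁻¹) = 0 := by omega
    · rw [hK m hmK h0, mul_one] at hmH
      exact absurd (by simpa using H.inv_mem hmH) htH
    · exact (mul_inv_eq_one.mp (hK _ (K.mul_mem htK (K.inv_mem hmK)) h0)).symm
  have hle := hmin (t * h) (by simpa using hh)
  rw [absLe, hmt, ht] at hle
  omega

end AbsoluteLength

section MovedSpace

open Module

variable {V : Type*} [NormedAddCommGroup V] [InnerProductSpace ℝ V] [FiniteDimensional ℝ V]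

lemma finrank_fixSpace_add_finrank_movSpace (w : V ≃ₗᵢ[ℝ] V) :
    finrank ℝ (fixSpace w) + finrank ℝ (movSpace w) = finrank ℝ V :=
  Submodule.finrank_add_finrank_orthogonal _

lemma movSpace_eq_range (w : V ≃ₗᵢ[ℝ] V) :
    movSpace w = LinearMap.range ((w.toLinearEquiv : V →ₗ[ℝ] V) - LinearMap.id) := by
  symm
  apply Submodule.eq_of_le_of_finrank_eq
  · rintro _ ⟨v, rfl⟩
    rw [movSpace, Submodule.mem_orthogonal]
    intro u hu
    rw [mem_fixSpace] at hu
    have huv : ⟪u, w v⟫ = ⟪u, v⟫ := by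
      conv_lhs => rw [← hu]
      exact w.inner_map_map u v
    simp [inner_sub_right, huv]
  · have := LinearMap.finrank_range_add_finrank_ker
      ((w.toLinearEquiv : V →ₗ[ℝ] V) - LinearMap.id)
    have := finrank_fixSpace_add_finrank_movSpace w
    rw [fixSpace] at *
    omega

lemma apply_sub_mem_movSpace (w : V ≃ₗᵢ[ℝ] V) (v : V) : w v - v ∈ movSpace w := by
  rw [movSpace_eq_range]
  exact ⟨v, rfl⟩

lemma exists_apply_sub_eq_of_mem_movSpace {w : V ≃ₗᵢ[ℝ] V} {α : V} (hα : α ∈ movSpace w) :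
    ∃ v, w v - v = α := by
  rw [movSpace_eq_range] at hα
  exact hα

lemma movSpace_mul_le (u w : V ≃ₗᵢ[ℝ] V) : movSpace (u * w) ≤ movSpace u ⊔ movSpace w := by
  intro _ hv
  obtain ⟨v, rfl⟩ := exists_apply_sub_eq_of_mem_movSpace hv
  have : (u * w) v - v = (u (w v) - w v) + (w v - v) := by simp
  rw [this]
  exact Submodule.add_mem_sup (apply_sub_mem_movSpace u _) (apply_sub_mem_movSpace w v)

lemma finrank_movSpace_mul_le (u w : V ≃ₗᵢ[ℝ] V) :
    finrank ℝ (movSpace (u * w)) ≤ finrank ℝ (movSpace u) + finrank ℝ (movSpace w) :=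
  (Submodule.finrank_mono (movSpace_mul_le u w)).trans
    (Submodule.finrank_add_le_finrank_add_finrank _ _)

lemma movSpace_eq_bot_iff {w : V ≃ₗᵢ[ℝ] V} : movSpace w = ⊥ ↔ w = 1 := by
  constructor
  · intro h
    ext v
    have hv := apply_sub_mem_movSpace w v
    rw [h, Submodule.mem_bot, sub_eq_zero] at hv
    exact hv
  · rintro rfl
    rw [eq_bot_iff]
    intro _ hv
    obtain ⟨v, rfl⟩ := exists_apply_sub_eq_of_mem_movSpace hv
    simp

lemma finrank_movSpace_eq_zero_iff {w : V ≃ₗᵢ[ℝ] V} : finrank ℝ (movSpace w) = 0 ↔ w = 1 := by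
  rw [Submodule.finrank_eq_zero, movSpace_eq_bot_iff]

lemma finrank_movSpace_rootReflection {α : V} (hα : α ≠ 0) :
    finrank ℝ (movSpace (rootReflection α)) = 1 := by
  have hle : movSpace (rootReflection α) ≤ ℝ ∙ α := by
    intro _ hv
    obtain ⟨v, rfl⟩ := exists_apply_sub_eq_of_mem_movSpace hv
    exact rootReflection_apply_sub_mem_span α v
  have hne : rootReflection α ≠ 1 := fun h =>
    hα (inner_self_eq_zero.mp (rootReflection_apply_eq_self_iff.mp (by rw [h]; rfl)))
  have := Submodule.finrank_mono hle
  rw [finrank_span_singleton hα] at this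
  have := finrank_movSpace_eq_zero_iff.not.mpr hne
  omega

lemma finrank_movSpace_conj (g w : V ≃ₗᵢ[ℝ] V) :
    finrank ℝ (movSpace (g * w * g⁻¹)) = finrank ℝ (movSpace w) := by
  have hfix : fixSpace (g * w * g⁻¹) = (fixSpace w).map (g.toLinearEquiv : V →ₗ[ℝ] V) := by
    ext v
    rw [Submodule.mem_map_equiv, mem_fixSpace, mem_fixSpace]
    change g (w (g.symm v)) = v ↔ w (g.symm v) = g.symm v
    exact ⟨fun h => by simpa using congrArg g.symm h, fun h => by simp [h]⟩
  have h1 := finrank_fixSpace_add_finrank_movSpace w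
  have h2 := finrank_fixSpace_add_finrank_movSpace (g * w * g⁻¹)
  rw [hfix, LinearEquiv.finrank_map_eq] at h2
  omega

lemma finrank_movSpace_lt_of_fixSpace_lt {u w : V ≃ₗᵢ[ℝ] V} (h : fixSpace u < fixSpace w) :
    finrank ℝ (movSpace w) < finrank ℝ (movSpace u) := by
  have := Submodule.finrank_lt_finrank_of_lt h
  have := finrank_fixSpace_add_finrank_movSpace u
  have := finrank_fixSpace_add_finrank_movSpace w
  omega

/-- Writing `α = w v - v`, the reflection `t_α` sends `w v` back to `v`, so `t_α w` fixes `v` on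
top of `Fix(w)`. -/
lemma finrank_movSpace_rootReflection_mul_lt {w : V ≃ₗᵢ[ℝ] V} {α : V} (hα : α ∈ movSpace w)
    (hα0 : α ≠ 0) : finrank ℝ (movSpace (rootReflection α * w)) < finrank ℝ (movSpace w) := by
  obtain ⟨v, rfl⟩ := exists_apply_sub_eq_of_mem_movSpace hα
  apply finrank_movSpace_lt_of_fixSpace_lt
  refine lt_of_le_of_ne (fun u hu => ?_) fun h => hα0 ?_
  · rw [mem_fixSpace] at hu ⊢
    rw [LinearIsometryEquiv.coe_mul, Function.comp_apply, hu, rootReflection_apply_eq_self_iff,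
      real_inner_comm]
    exact (Submodule.mem_orthogonal _ _).mp hα u (mem_fixSpace.mpr hu)
  · have hv : v ∈ fixSpace (rootReflection (w v - v) * w) := by
      rw [mem_fixSpace, LinearIsometryEquiv.coe_mul, Function.comp_apply,
        rootReflection_apply_sub (w.norm_map v)]
    rw [← h, mem_fixSpace] at hv
    rw [hv, sub_self]

lemma finrank_movSpace_lt_rootReflection_mul {w : V ≃ₗᵢ[ℝ] V} {α : V} (hα : α ∉ movSpace w) :
    finrank ℝ (movSpace w) < finrank ℝ (movSpace (rootReflection α * w)) := by
  apply finrank_movSpace_lt_of_fixSpace_lt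
  obtain ⟨u, hu, hαu⟩ : ∃ u ∈ fixSpace w, ⟪u, α⟫ ≠ 0 := by
    by_contra! h
    exact hα ((Submodule.mem_orthogonal _ _).mpr h)
  refine lt_of_le_of_ne (fun v hv => ?_) fun h => hαu ?_
  · rw [mem_fixSpace, LinearIsometryEquiv.coe_mul, Function.comp_apply] at hv
    -- `w v - v` lies both on the line `ℝ α` and in `Mov(w)`, which does not contain `α`
    obtain ⟨c, hc⟩ := Submodule.mem_span_singleton.mp
      (rootReflection_apply_sub_mem_span α (w v))
    rw [hv] at hc
    obtain rfl | hc0 := eq_or_ne c 0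
    · rw [zero_smul, eq_comm, sub_eq_zero] at hc
      exact mem_fixSpace.mpr hc.symm
    · refine absurd (((movSpace w).smul_mem_iff hc0).mp ?_) hα
      rw [hc, ← neg_sub]
      exact neg_mem (apply_sub_mem_movSpace w v)
  · have hwu := mem_fixSpace.mp hu
    rw [← h, mem_fixSpace, LinearIsometryEquiv.coe_mul, Function.comp_apply, hwu,
      rootReflection_apply_eq_self_iff] at hu
    rwa [real_inner_comm]

lemma exists_rootSpan_le_movSpace (Φ : Set V) (H : Subgroup (V ≃ₗᵢ[ℝ] V)) :
    ∃ h ∈ H, rootSpan Φ H ≤ movSpace h := by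
  obtain ⟨h, hH, hmax⟩ :
      ∃ h ∈ H, ∀ g ∈ H, finrank ℝ (movSpace g) ≤ finrank ℝ (movSpace h) := by
    let S := {n | ∃ g ∈ H, finrank ℝ (movSpace g) = n}
    have hS : BddAbove S := ⟨finrank ℝ V, by rintro _ ⟨g, -, rfl⟩; exact Submodule.finrank_le _⟩
    obtain ⟨h, hH, hh⟩ : sSup S ∈ S :=
      Nat.sSup_mem ⟨0, 1, H.one_mem, finrank_movSpace_eq_zero_iff.mpr rfl⟩ hS
    exact ⟨h, hH, fun g hg => hh ▸ le_csSup hS ⟨g, hg, rfl⟩⟩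
  refine ⟨h, hH, Submodule.span_le.mpr fun β hβ => ?_⟩
  by_contra hβh
  exact (finrank_movSpace_lt_rootReflection_mul hβh).not_ge (hmax _ (H.mul_mem hβ.2 hH))

end MovedSpace

section RootSets

open Submodule
open scoped NNReal

variable {V : Type*} [NormedAddCommGroup V] [InnerProductSpace ℝ V]

lemma inner_nonneg_of_mem_span_nnreal {x v : V} {S : Set V} (hS : ∀ u ∈ S, 0 ≤ ⟪x, u⟫)
    (hv : v ∈ span ℝ≥0 S) : 0 ≤ ⟪x, v⟫ := by
  induction hv using Submodule.span_induction with
  | mem u hu => exact hS u hu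
  | zero => simp
  | add a b _ _ ha hb => rw [inner_add_right]; linarith
  | smul c a _ ha => rw [NNReal.smul_def, real_inner_smul_right]; exact mul_nonneg c.2 ha

lemma eq_zero_of_mem_span_nnreal_of_inner_eq_zero {x v : V} {S : Set V}
    (hS : ∀ u ∈ S, 0 < ⟪x, u⟫) (hv : v ∈ span ℝ≥0 S) (hxv : ⟪x, v⟫ = 0) : v = 0 := by
  suffices 0 ≤ ⟪x, v⟫ ∧ (⟪x, v⟫ = 0 → v = 0) from this.2 hxv
  clear hxv
  induction hv using Submodule.span_induction with
  | mem u hu => exact ⟨(hS u hu).le, fun h => absurd h (hS u hu).ne'⟩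
  | zero => simp
  | add a b _ _ ha hb =>
    rw [inner_add_right]
    refine ⟨by linarith [ha.1, hb.1], fun h => ?_⟩
    rw [ha.2 (by linarith [ha.1, hb.1]), hb.2 (by linarith [ha.1, hb.1]), add_zero]
  | smul c a _ ha =>
    rw [NNReal.smul_def, real_inner_smul_right]
    refine ⟨mul_nonneg c.2 ha.1, fun h => ?_⟩
    rcases mul_eq_zero.mp h with h | h
    · rw [h, zero_smul]
    · rw [ha.2 h, smul_zero]

lemma exists_inner_pos_of_mem_span_nnreal {v : V} {S : Set V} (hv : v ∈ span ℝ≥0 S)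
    (hv0 : v ≠ 0) : ∃ u ∈ S, 0 < ⟪u, v⟫ := by
  by_contra! h
  have := inner_nonneg_of_mem_span_nnreal (x := -v)
    (fun u hu => by rw [inner_neg_left, real_inner_comm]; linarith [h u hu]) hv
  rw [inner_neg_left, neg_nonneg, real_inner_self_nonpos] at this
  exact hv0 this

lemma exists_forall_inner_ne_zero {S : Set V} (hS : S.Finite) {F : Submodule ℝ V}
    (h : ∀ α ∈ S, ∃ v ∈ F, ⟪v, α⟫ ≠ 0) : ∃ x ∈ F, ∀ α ∈ S, ⟪x, α⟫ ≠ 0 := by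
  have := hS.fintype
  let p : S → Submodule ℝ F := fun α => LinearMap.ker ((innerₗ V (α : V)).comp F.subtype)
  have hp : ∀ α, p α ≠ ⊤ := by
    rintro ⟨α, hα⟩ htop
    obtain ⟨v, hvF, hv⟩ := h α hα
    have := LinearMap.mem_ker.mp (htop ▸ Submodule.mem_top : (⟨v, hvF⟩ : F) ∈ p ⟨α, hα⟩)
    exact hv (by simpa [real_inner_comm] using this)
  obtain ⟨y, -, hy⟩ := Set.exists_of_ssubset
    (iUnion_ssubset_of_forall_ne_top_of_card_lt Finset.univ p hp
      (by rw [ENat.card_eq_top_of_infinite]; exact ENat.natCast_lt_top _))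
  simp only [Finset.mem_univ, Set.iUnion_true, Set.mem_iUnion, SetLike.mem_coe, not_exists] at hy
  exact ⟨y, y.2, fun α hα => by simpa [p, real_inner_comm] using hy ⟨α, hα⟩⟩

def reflectionGroup (Φ : Set V) : Subgroup (V ≃ₗᵢ[ℝ] V) := Subgroup.closure (rootReflection '' Φ)

structure IsFiniteRootSet (Φ : Set V) : Prop where
  finite : Φ.Finite
  ne_zero : ∀ α ∈ Φ, α ≠ 0
  rootReflection_apply_mem : ∀ α ∈ Φ, ∀ β ∈ Φ, rootReflection α β ∈ Φ

variable {Φ : Set V}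

lemma IsRootSystemOf.isFiniteRootSet {W : Subgroup (V ≃ₗᵢ[ℝ] V)} (h : IsRootSystemOf Φ W) :
    IsFiniteRootSet Φ :=
  ⟨h.finite_roots, h.ne_zero, fun α hα =>
    h.invariant _ (h.closure_eq ▸ Subgroup.subset_closure ⟨α, hα, rfl⟩)⟩

lemma IsFiniteRootSet.neg_mem (hΦ : IsFiniteRootSet Φ) {β : V} (hβ : β ∈ Φ) : -β ∈ Φ := by
  simpa [rootReflection_apply_self] using hΦ.rootReflection_apply_mem β hβ β hβ

lemma IsFiniteRootSet.apply_mem (hΦ : IsFiniteRootSet Φ) {g : V ≃ₗᵢ[ℝ] V}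
    (hg : g ∈ reflectionGroup Φ) {β : V} (hβ : β ∈ Φ) : g β ∈ Φ := by
  induction hg using Subgroup.closure_induction'' generalizing β with
  | mem _ h =>
    obtain ⟨α, hα, rfl⟩ := h
    exact hΦ.rootReflection_apply_mem α hα β hβ
  | inv_mem _ h =>
    obtain ⟨α, hα, rfl⟩ := h
    rw [rootReflection_inv]
    exact hΦ.rootReflection_apply_mem α hα β hβ
  | one => exact hβ
  | mul g g' _ _ hg hg' => exact hg (hg' hβ)

/-- A minimal set of positive roots (those with `0 < ⟪x, β⟫`) generating every positive root as a
nonnegative combination, as in the usual construction of simple systems. -/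
structure IsSimpleSystem (Φ : Set V) (x : V) (Δ : Set V) : Prop where
  mem_pos : ∀ δ ∈ Δ, δ ∈ Φ ∧ 0 < ⟪x, δ⟫
  mem_span : ∀ β ∈ Φ, 0 < ⟪x, β⟫ → β ∈ span ℝ≥0 Δ
  notMem_span_diff : ∀ δ ∈ Δ, δ ∉ span ℝ≥0 (Δ \ {δ})

lemma exists_isSimpleSystem (hΦ : Φ.Finite) (x : V) : ∃ Δ, IsSimpleSystem Φ x Δ := by
  set P := {β | β ∈ Φ ∧ 0 < ⟪x, β⟫}
  obtain ⟨Δ, ⟨hΔP, hPΔ⟩, hmin⟩ := Set.Finite.exists_minimal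
    (s := {Δ | Δ ⊆ P ∧ P ⊆ span ℝ≥0 Δ})
    ((hΦ.subset fun _ h => h.1).finite_subsets.subset fun _ h => h.1) ⟨P, subset_rfl, subset_span⟩
  refine ⟨Δ, hΔP, fun β hβ hβx => hPΔ ⟨hβ, hβx⟩, fun δ hδ hδspan => ?_⟩
  have hle : span ℝ≥0 Δ ≤ span ℝ≥0 (Δ \ {δ}) := span_le.mpr fun u hu => by
    by_cases h : u = δ
    · exact h ▸ hδspan
    · exact subset_span ⟨hu, h⟩
  exact (hmin ⟨Set.sdiff_subset.trans hΔP, hPΔ.trans hle⟩ Set.sdiff_subset hδ).2 rfl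

variable {x : V} {Δ : Set V}

lemma IsSimpleSystem.inner_rootReflection_pos (hΦ : IsFiniteRootSet Φ)
    (hx : ∀ β ∈ Φ, ⟪x, β⟫ ≠ 0) (hΔ : IsSimpleSystem Φ x Δ) {δ β : V} (hδ : δ ∈ Δ) (hβ : β ∈ Φ)
    (hβx : 0 < ⟪x, β⟫) (hβδ : β ∉ ℝ ∙ δ) : 0 < ⟪x, rootReflection δ β⟫ := by
  have hγ := hΦ.rootReflection_apply_mem δ (hΔ.mem_pos δ hδ).1 β hβ
  refine (hx _ hγ).lt_or_gt.resolve_left fun hneg => ?_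
  have hsplit : ∀ γ ∈ Φ, 0 < ⟪x, γ⟫ →
      ∃ a : ℝ≥0, ∃ p ∈ span ℝ≥0 (Δ \ {δ}), γ = a • δ + p := by
    intro γ hγ hγx
    have := hΔ.mem_span γ hγ hγx
    rw [← Set.insert_eq_of_mem hδ, ← Set.insert_sdiff_singleton, span_insert, mem_sup] at this
    obtain ⟨_, hy, p, hp, rfl⟩ := this
    obtain ⟨a, rfl⟩ := mem_span_singleton.mp hy
    exact ⟨a, p, hp, rfl⟩
  -- `β` and `-t_δ β` are positive roots summing to a multiple of `δ`: split both along `δ` and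
  -- the other simple roots, then minimality of `Δ` and positivity force `β ∈ ℝ ∙ δ`
  obtain ⟨a, p, hp, hβ_eq⟩ := hsplit β hβ hβx
  obtain ⟨b, q, hq, hγ_eq⟩ :=
    hsplit _ (hΦ.neg_mem hγ) (by rw [inner_neg_right]; linarith)
  set r := 2 * (⟪δ, β⟫ / ‖δ‖ ^ 2) - a - b
  have hpq : p + q = r • δ := by
    rw [rootReflection_apply] at hγ_eq
    rw [NNReal.smul_def] at hβ_eq hγ_eq
    linear_combination (norm := module) -hβ_eq - hγ_eq
  have hS : ∀ u ∈ Δ \ {δ}, 0 < ⟪x, u⟫ := fun u hu => (hΔ.mem_pos u hu.1).2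
  rcases lt_or_ge 0 r with hr | hr
  · apply hΔ.notMem_span_diff δ hδ
    have := (span ℝ≥0 (Δ \ {δ})).smul_mem r⁻¹.toNNReal (add_mem hp hq)
    rwa [NNReal.smul_def, Real.coe_toNNReal _ (inv_nonneg.mpr hr.le), hpq, smul_smul,
      inv_mul_cancel₀ hr.ne', one_smul] at this
  · have hp0 : p = 0 := by
      refine eq_zero_of_mem_span_nnreal_of_inner_eq_zero hS hp (le_antisymm ?_
        (inner_nonneg_of_mem_span_nnreal (fun u hu => (hS u hu).le) hp))
      have hxq := inner_nonneg_of_mem_span_nnreal (fun u hu => (hS u hu).le) hq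
      have hxpq := congrArg (⟪x, ·⟫) hpq
      simp only [inner_add_right, real_inner_smul_right] at hxpq
      nlinarith [(hΔ.mem_pos δ hδ).2]
    rw [hp0, add_zero] at hβ_eq
    exact hβδ (hβ_eq ▸ smul_mem _ _ (mem_span_singleton_self δ))

lemma IsSimpleSystem.rootReflection_mem_closure (hΦ : IsFiniteRootSet Φ)
    (hx : ∀ β ∈ Φ, ⟪x, β⟫ ≠ 0) (hΔ : IsSimpleSystem Φ x Δ) {β : V} (hβ : β ∈ Φ)
    (hβx : 0 < ⟪x, β⟫) : rootReflection β ∈ Subgroup.closure (rootReflection '' Δ) := by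
  by_contra! h
  obtain ⟨β, ⟨hβ, hβx, hβS⟩, hmin⟩ := Set.exists_min_image
    {β | β ∈ Φ ∧ 0 < ⟪x, β⟫ ∧ rootReflection β ∉ Subgroup.closure (rootReflection '' Δ)}
    (⟪x, ·⟫) (hΦ.finite.subset fun _ h => h.1) ⟨β, hβ, hβx, h⟩
  have hβ0 := hΦ.ne_zero β hβ
  obtain ⟨δ, hδ, hδβ⟩ := exists_inner_pos_of_mem_span_nnreal (hΔ.mem_span β hβ hβx) hβ0
  have hδS : rootReflection δ ∈ Subgroup.closure (rootReflection '' Δ) :=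
    Subgroup.subset_closure ⟨δ, hδ, rfl⟩
  by_cases hβδ : β ∈ ℝ ∙ δ
  · obtain ⟨c, rfl⟩ := mem_span_singleton.mp hβδ
    have hc : c ≠ 0 := by rintro rfl; exact hβ0 (zero_smul _ _)
    exact hβS (rootReflection_smul δ hc ▸ hδS)
  -- `t_δ β` is a lower positive root, and `t_β` is the conjugate of its reflection by `t_δ`
  have hγS : rootReflection (rootReflection δ β) ∈ Subgroup.closure (rootReflection '' Δ) := by
    by_contra hγS
    exact (hmin _ ⟨hΦ.rootReflection_apply_mem δ (hΔ.mem_pos δ hδ).1 β hβ,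
      hΔ.inner_rootReflection_pos hΦ hx hδ hβ hβx hβδ, hγS⟩).not_gt
      (inner_rootReflection_lt (hΔ.mem_pos δ hδ).2 hδβ)
  apply hβS
  rw [← rootReflection_rootReflection δ β, rootReflection_map]
  exact mul_mem (mul_mem hδS hγS) (inv_mem hδS)

lemma IsSimpleSystem.reflectionGroup_le (hΦ : IsFiniteRootSet Φ) (hx : ∀ β ∈ Φ, ⟪x, β⟫ ≠ 0)
    (hΔ : IsSimpleSystem Φ x Δ) : reflectionGroup Φ ≤ Subgroup.closure (rootReflection '' Δ) := by
  rw [reflectionGroup, Subgroup.closure_le]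
  rintro _ ⟨β, hβ, rfl⟩
  rcases (hx β hβ).lt_or_gt with hneg | hpos
  · rw [← rootReflection_neg]
    exact hΔ.rootReflection_mem_closure hΦ hx (hΦ.neg_mem hβ) (by rw [inner_neg_right]; linarith)
  · exact hΔ.rootReflection_mem_closure hΦ hx hβ hpos

lemma IsSimpleSystem.exists_list_prod_eq_mul_rootReflection (hΦ : IsFiniteRootSet Φ)
    (hx : ∀ β ∈ Φ, ⟪x, β⟫ ≠ 0) (hΔ : IsSimpleSystem Φ x Δ) {l : List (V ≃ₗᵢ[ℝ] V)}
    (hl : ∀ s ∈ l, s ∈ rootReflection '' Δ) {δ : V} (hδ : δ ∈ Δ) (hneg : ⟪x, l.prod δ⟫ < 0) :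
    ∃ l' : List (V ≃ₗᵢ[ℝ] V), (∀ s ∈ l', s ∈ rootReflection '' Δ) ∧
      l'.prod = l.prod * rootReflection δ ∧ l'.length + 1 = l.length := by
  induction l with
  | nil =>
    rw [List.prod_nil, LinearIsometryEquiv.coe_one, id_eq] at hneg
    linarith [(hΔ.mem_pos δ hδ).2]
  | cons s l ih =>
    obtain ⟨ε, hε, rfl⟩ := hl s List.mem_cons_self
    have hl' : ∀ s ∈ l, s ∈ rootReflection '' Δ := fun s hs => hl s (List.mem_cons_of_mem _ hs)
    have hlδ : l.prod δ ∈ Φ := by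
      refine hΦ.apply_mem ?_ (hΔ.mem_pos δ hδ).1
      refine list_prod_mem fun s hs => ?_
      obtain ⟨α, hα, rfl⟩ := hl' s hs
      exact Subgroup.subset_closure ⟨α, (hΔ.mem_pos α hα).1, rfl⟩
    rw [List.prod_cons, LinearIsometryEquiv.coe_mul, Function.comp_apply] at hneg
    rcases (hx _ hlδ).lt_or_gt with hneg' | hpos
    · obtain ⟨l', hl'Δ, hprod, hlen⟩ := ih hl' hneg'
      refine ⟨rootReflection ε :: l', ?_, ?_, by simp [hlen]⟩
      · exact fun s hs => (List.mem_cons.mp hs).elim (· ▸ ⟨ε, hε, rfl⟩) (hl'Δ s)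
      · rw [List.prod_cons, List.prod_cons, hprod, mul_assoc]
    -- `t_ε` makes the positive root `l.prod δ` negative, so it is a multiple of `ε`
    · obtain ⟨c, hc⟩ := mem_span_singleton.mp <| show l.prod δ ∈ ℝ ∙ ε by
        by_contra h
        linarith [hΔ.inner_rootReflection_pos hΦ hx hε hlδ hpos h]
      have hc0 : c ≠ 0 := by rintro rfl; exact hΦ.ne_zero _ hlδ (by rw [← hc, zero_smul])
      refine ⟨l, hl', ?_, by simp⟩
      rw [List.prod_cons, ← rootReflection_smul ε hc0, hc, rootReflection_map, inv_mul_cancel_right,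
        mul_assoc, rootReflection_mul_self, mul_one]

lemma IsSimpleSystem.list_prod_eq_one (hΦ : IsFiniteRootSet Φ) (hx : ∀ β ∈ Φ, ⟪x, β⟫ ≠ 0)
    (hΔ : IsSimpleSystem Φ x Δ) {l : List (V ≃ₗᵢ[ℝ] V)} (hl : ∀ s ∈ l, s ∈ rootReflection '' Δ)
    (hlx : l.prod x = x) : l.prod = 1 := by
  induction hn : l.length using Nat.strong_induction_on generalizing l with
  | _ n ih =>
  rcases l.eq_nil_or_concat' with rfl | ⟨l, s, rfl⟩
  · rfl
  obtain ⟨δ, hδ, rfl⟩ := hl s (by simp)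
  have hl' : ∀ s ∈ l, s ∈ rootReflection '' Δ := fun s hs => hl s (by simp [hs])
  rw [List.prod_append, List.prod_singleton] at hlx ⊢
  -- `l.prod * t_δ` fixes `x`, so it keeps `δ` positive, while it sends `δ` to `-l.prod δ`
  have hneg : ⟪x, l.prod δ⟫ < 0 := by
    have h := (l.prod * rootReflection δ).inner_map_map x δ
    rw [hlx, LinearIsometryEquiv.coe_mul, Function.comp_apply, rootReflection_apply_self,
      map_neg, inner_neg_right] at h
    linarith [(hΔ.mem_pos δ hδ).2]
  obtain ⟨l', hl'Δ, hprod, hlen⟩ := hΔ.exists_list_prod_eq_mul_rootReflection hΦ hx hl' hδ hneg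
  rw [← hprod] at hlx ⊢
  exact ih l'.length (by simp at hn; omega) hl'Δ hlx rfl

theorem IsFiniteRootSet.eq_one_of_apply_eq_self (hΦ : IsFiniteRootSet Φ)
    (hx : ∀ β ∈ Φ, ⟪x, β⟫ ≠ 0) {g : V ≃ₗᵢ[ℝ] V} (hg : g ∈ reflectionGroup Φ) (hgx : g x = x) :
    g = 1 := by
  obtain ⟨Δ, hΔ⟩ := exists_isSimpleSystem hΦ.finite x
  have hg' := hΔ.reflectionGroup_le hΦ hx hg
  rw [← Subgroup.mem_toSubmonoid, Subgroup.closure_toSubmonoid_of_isOfFinOrder] at hg'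
  · obtain ⟨l, hl, rfl⟩ := Submonoid.exists_list_of_mem_closure hg'
    exact hΔ.list_prod_eq_one hΦ hx hl hgx
  · rintro _ ⟨δ, -, rfl⟩
    exact isOfFinOrder_iff_pow_eq_one.mpr ⟨2, two_pos, by rw [pow_two, rootReflection_mul_self]⟩

lemma IsFiniteRootSet.exists_mem_movSpace (hΦ : IsFiniteRootSet Φ) {w : V ≃ₗᵢ[ℝ] V}
    (hw : w ∈ reflectionGroup Φ) (hw1 : w ≠ 1) : ∃ α ∈ Φ, α ∈ movSpace w := by
  by_contra! h
  -- otherwise `Fix(w)` contains a vector orthogonal to no root, whose stabilizer is trivial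
  obtain ⟨x, hxw, hx⟩ := exists_forall_inner_ne_zero hΦ.finite (F := fixSpace w) fun α hα => by
    by_contra! h'
    exact h α hα ((Submodule.mem_orthogonal _ _).mpr h')
  exact hw1 (hΦ.eq_one_of_apply_eq_self hx hw (mem_fixSpace.mp hxw))

end RootSets

section ReflectionLength

variable {V : Type*} [NormedAddCommGroup V] [InnerProductSpace ℝ V] [FiniteDimensional ℝ V]
  {Φ : Set V}

/-- Carter's lemma. -/
theorem IsFiniteRootSet.exists_list_length_le_finrank_movSpace (hΦ : IsFiniteRootSet Φ)
    {w : V ≃ₗᵢ[ℝ] V} (hw : w ∈ reflectionGroup Φ) :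
    ∃ l : List (V ≃ₗᵢ[ℝ] V), (∀ t ∈ l, t ∈ rootReflection '' Φ) ∧ l.prod = w ∧
      l.length ≤ finrank ℝ (movSpace w) := by
  induction hn : finrank ℝ (movSpace w) using Nat.strong_induction_on generalizing w with
  | _ n ih =>
  by_cases hw1 : w = 1
  · exact ⟨[], by simp, by simp [hw1], by simp⟩
  obtain ⟨α, hαΦ, hαw⟩ := hΦ.exists_mem_movSpace hw hw1
  have hαW : rootReflection α ∈ reflectionGroup Φ := Subgroup.subset_closure ⟨α, hαΦ, rfl⟩
  have hlt := finrank_movSpace_rootReflection_mul_lt hαw (hΦ.ne_zero α hαΦ)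
  obtain ⟨l, hlΦ, hlprod, hlen⟩ := ih _ (hn ▸ hlt) (mul_mem hαW hw) rfl
  refine ⟨rootReflection α :: l, ?_, ?_, by simp; omega⟩
  · exact fun t ht => (List.mem_cons.mp ht).elim (· ▸ ⟨α, hαΦ, rfl⟩) (hlΦ t)
  · rw [List.prod_cons, hlprod, ← mul_assoc, rootReflection_mul_self, one_mul]

theorem IsFiniteRootSet.absLength_eq_finrank_movSpace (hΦ : IsFiniteRootSet Φ)
    {w : V ≃ₗᵢ[ℝ] V} (hw : w ∈ reflectionGroup Φ) :
    absLength (rootReflection '' Φ) w = finrank ℝ (movSpace w) := by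
  obtain ⟨l, hlΦ, hlw, hlen⟩ := hΦ.exists_list_length_le_finrank_movSpace hw
  obtain ⟨l', hl'Φ, hl'w, hl'len⟩ := exists_list_length_eq_absLength ⟨l, hlΦ, hlw⟩
  refine le_antisymm ((hlw ▸ absLength_list_prod_le hlΦ).trans hlen) ?_
  rw [← hl'len, ← hl'w]
  refine le_length_of_subadditive (fun w => finrank ℝ (movSpace w))
    (finrank_movSpace_eq_zero_iff.mpr rfl) finrank_movSpace_mul_le ?_ hl'Φ
  rintro _ ⟨α, hα, rfl⟩
  exact (finrank_movSpace_rootReflection (hΦ.ne_zero α hα)).le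

end ReflectionLength

/-- every modular reflection subgroup of a finite Coxeter group `W` is a
parabolic reflection subgroup. -/
theorem modular_reflection_subgroup_is_parabolic
    {V : Type*} [NormedAddCommGroup V] [InnerProductSpace ℝ V] [FiniteDimensional ℝ V]
    (Φ : Set V) (W H : Subgroup (V ≃ₗᵢ[ℝ] V)) (hW : IsRootSystemOf Φ W)
    (hHrefl : IsReflSubgroup Φ H)
    (hHmod : IsModularSubgroupIn (rootReflection '' Φ) H W) :
    IsParabolicSubgroup Φ H := by
  have hΦ := hW.isFiniteRootSet
  obtain rfl : W = reflectionGroup Φ := hW.closure_eq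
  have hHW : H ≤ reflectionGroup Φ := by
    obtain ⟨R, hR, rfl⟩ := hHrefl
    exact Subgroup.closure_mono hR
  intro α hαΦ hαH
  by_contra htα
  have hα0 := hΦ.ne_zero α hαΦ
  have htαW : rootReflection α ∈ reflectionGroup Φ := Subgroup.subset_closure ⟨α, hαΦ, rfl⟩
  obtain ⟨h, hh, hspan⟩ := exists_rootSpan_le_movSpace Φ H
  have key := hHmod.absLength_mul_eq hHW
    (fun g hg h0 => finrank_movSpace_eq_zero_iff.mp (hΦ.absLength_eq_finrank_movSpace hg ▸ h0))
    htαW (by rw [hΦ.absLength_eq_finrank_movSpace htαW, finrank_movSpace_rootReflection hα0])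
    htα hh
  rw [hΦ.absLength_eq_finrank_movSpace (mul_mem htαW (hHW hh)),
    hΦ.absLength_eq_finrank_movSpace (mul_mem (mul_mem htαW (hHW hh)) (inv_mem htαW)),
    finrank_movSpace_conj] at key
  have := finrank_movSpace_rootReflection_mul_lt (hspan hαH) hα0
  omega
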